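/- (Lemma 2 of the paper) A two-element subsequence q ∘ q' of the sequence R_{A,B} is a maximal increasing subsequence of R_{A,B}[f(q):f(q')] if and only if ⌈i_q⌉ ≤ i_{q'}, ⌈j_q⌉ ≤ j_{q'}, and (i_{q'} − i_q) + (j_{q'} − j_q) = 1 all hold. -/

import Mathlib

/-- Formal tokens: `r i j` (weight `c - d i j`) and `rt i j` (the token `r̃(i,j)`, weight `c`). -/
inductive Tok where
  | r  (i j : ℕ) : Tok
  | rt (i j : ℕ) : Tok
deriving DecidableEq

/-- The domain of tokens: `r(i,j)` for `1 ≤ i ≤ m`, `1 ≤ j ≤ n`,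
and `r̃(i,j)` for `2 ≤ i ≤ m`, `2 ≤ j ≤ n`. -/
def TokDom (m n : ℕ) : Tok → Prop
  | .r i j  => 1 ≤ i ∧ i ≤ m ∧ 1 ≤ j ∧ j ≤ n
  | .rt i j => 2 ≤ i ∧ i ≤ m ∧ 2 ≤ j ∧ j ≤ n

/-- The position `f(q)` of a token in the sequence `R_{A,B}`. -/
def tpos (n : ℕ) : Tok → ℕ
  | .r i j  => (i - 1) * (2 * n - 1) + j
  | .rt i j => (i - 1) * (2 * n - 1) - j + 2

/-- The integer value of a token in the sequence `R_{A,B}`. -/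
def tval (m : ℕ) : Tok → ℕ
  | .r i j  => (j - 1) * (2 * m - 1) + i
  | .rt i j => (j - 1) * (2 * m - 1) - i + 2

/-- The (half-integer) row coordinate `i_q` of a token. -/
def iq : Tok → ℚ
  | .r i _  => i
  | .rt i _ => (i : ℚ) - 1/2

/-- The (half-integer) column coordinate `j_q` of a token. -/
def jq : Tok → ℚ
  | .r _ j  => j
  | .rt _ j => (j : ℚ) - 1/2

/-- The weight of a token: `c - d i j` for `r(i,j)` and `c` for `r̃(i,j)`. -/
def tw (c : ℕ) (d : ℕ → ℕ → ℕ) : Tok → ℕ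
  | .r i j => c - d i j
  | .rt _ _ => c

/-- `Q` is an increasing subsequence of the segment of `R_{A,B}` occupying
positions `pl` through `pr`: its tokens are in the domain, their positions lie in
`[pl, pr]` and strictly increase, and their values strictly increase. -/
def IncSeg (m n pl pr : ℕ) (Q : List Tok) : Prop :=
  (∀ t ∈ Q, TokDom m n t ∧ pl ≤ tpos n t ∧ tpos n t ≤ pr) ∧
    Q.Chain' fun t t' => tpos n t < tpos n t' ∧ tval m t < tval m t'

/-- `Q` is `[a:b]`-banded: every value lies in `[a, b]`. -/
def Banded (m a b : ℕ) (Q : List Tok) : Prop :=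
  ∀ t ∈ Q, a ≤ tval m t ∧ tval m t ≤ b

/-- `Q` is a maximal increasing subsequence of the segment `[pl, pr]` of `R_{A,B}`:
it is the only increasing subsequence of the segment having it as a subsequence. -/
def MaxIncSeg (m n pl pr : ℕ) (Q : List Tok) : Prop :=
  IncSeg m n pl pr Q ∧ ∀ Q', IncSeg m n pl pr Q' → Q.Sublist Q' → Q' = Q

/-- `Q` is a maximal `[a:b]`-banded increasing subsequence of the segment `[pl, pr]`. -/
def MaxBandIncSeg (m n pl pr a b : ℕ) (Q : List Tok) : Prop :=
  IncSeg m n pl pr Q ∧ Banded m a b Q ∧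
    ∀ Q', IncSeg m n pl pr Q' → Banded m a b Q' → Q.Sublist Q' → Q' = Q


/-! A two-element increasing subsequence `q ∘ q'` of a segment is maximal exactly when no token
lies between `q` and `q'` both in position and in value. Positions in `R_{A,B}` compare
lexicographically by the row block `⌊i_q⌋` and the place inside the block, values likewise with
rows and columns exchanged. A case check then shows that a token in between exists unless `q'` is
a nearest successor of `q`: `r(i+1,j)`, `r(i,j+1)` or `r̃(i+1,j+1)` after `r(i,j)`, and `r(i,j)`
after `r̃(i,j)`. These are precisely the pairs singled out by the coordinate condition. -/

def Precedes (m n : ℕ) (t t' : Tok) : Prop :=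
  tpos n t < tpos n t' ∧ tval m t < tval m t'

instance {m n : ℕ} : Trans (Precedes m n) (Precedes m n) (Precedes m n) :=
  ⟨fun h h' => ⟨h.1.trans h'.1, h.2.trans h'.2⟩⟩

instance {m n : ℕ} : Std.Irrefl (Precedes m n) := ⟨fun _ h => lt_irrefl _ h.1⟩

theorem maxIncSeg_pair_iff {m n : ℕ} {q q' : Tok} (hq : TokDom m n q) (hq' : TokDom m n q') :
    MaxIncSeg m n (tpos n q) (tpos n q') [q, q'] ↔
      Precedes m n q q' ∧ ∀ t, TokDom m n t → Precedes m n q t → ¬ Precedes m n t q' := by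
  simp only [MaxIncSeg, IncSeg]
  constructor
  · rintro ⟨⟨-, hch⟩, hmax⟩
    have hqq' : Precedes m n q q' := List.isChain_pair.1 hch
    refine ⟨hqq', fun t ht hqt htq' => ?_⟩
    have hmid := hmax [q, t, q'] ⟨?_, List.isChain_cons_cons.2 ⟨hqt, List.isChain_pair.2 htq'⟩⟩
      (by simp)
    · simp at hmid
    · simp only [List.mem_cons, List.not_mem_nil, or_false]
      rintro x (rfl | rfl | rfl)
      exacts [⟨hq, le_rfl, hqq'.1.le⟩, ⟨ht, hqt.1.le, htq'.1.le⟩, ⟨hq', hqq'.1.le, le_rfl⟩]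
  · rintro ⟨hqq', hgap⟩
    refine ⟨⟨?_, List.isChain_pair.2 hqq'⟩, fun Q' ⟨hmem, hch⟩ hsub => ?_⟩
    · simp only [List.mem_cons, List.not_mem_nil, or_false]
      rintro x (rfl | rfl)
      exacts [⟨hq, le_rfl, hqq'.1.le⟩, ⟨hq', hqq'.1.le, le_rfl⟩]
    have hpw : Q'.Pairwise (Precedes m n) := (List.isChain_iff_pairwise (R := Precedes m n)).1 hch
    have hcmp : ∀ x ∈ Q', ∀ y ∈ Q', x ≠ y → Precedes m n x y ∨ Precedes m n y x :=
      have : Std.Symm fun x y => Precedes m n x y ∨ Precedes m n y x := ⟨fun _ _ => Or.symm⟩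
      (hpw.imp Or.inl).forall
    have hsub' : Q' ⊆ [q, q'] := by
      intro x hx
      by_contra hne
      simp only [List.mem_cons, List.not_mem_nil, or_false, not_or] at hne
      have hx_seg := hmem x hx
      have hqx := (hcmp q (hsub.subset (by simp)) x hx (Ne.symm hne.1)).resolve_right
        fun h => h.1.not_ge hx_seg.2.1
      have hxq' := (hcmp x hx q' (hsub.subset (by simp)) hne.2).resolve_right
        fun h => h.1.not_ge hx_seg.2.2
      exact hgap x hx_seg.1 hqx hxq'
    exact (hsub.eq_of_length (le_antisymm hsub.length_le (hpw.nodup.subperm hsub').length_le)).symm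

namespace Tok

def row : Tok → ℕ
  | r i _ | rt i _ => i

def col : Tok → ℕ
  | r _ j | rt _ j => j

def tilde : Tok → ℕ
  | r _ _ => 0
  | rt _ _ => 1

def swap : Tok → Tok
  | r i j => r j i
  | rt i j => rt j i

/-- Row block `i` of `R_{A,B}` is `r(i,1), …, r(i,n), r̃(i+1,n), …, r̃(i+1,2)`, of length
`2n - 1`. -/
def posKey (n : ℕ) : Tok → ℕ ×ₗ ℕ
  | r i j => toLex (i, j)
  | rt i j => toLex (i - 1, 2 * n + 1 - j)

def Adjacent (q q' : Tok) : Prop :=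
  q.row + q'.tilde ≤ q'.row ∧ q.col + q'.tilde ≤ q'.col ∧
    q'.row + q'.col + q.tilde = q.row + q.col + q'.tilde + 1

theorem tilde_le_one (t : Tok) : t.tilde ≤ 1 := by
  cases t <;> simp [tilde]

end Tok

theorem Nat.mul_add_lt_mul_add_iff {K a b x y : ℕ} (hx : 0 < x) (hxK : x ≤ K) (hy : 0 < y)
    (hyK : y ≤ K) : a * K + x < b * K + y ↔ a < b ∨ a = b ∧ x < y := by
  rcases lt_trichotomy a b with hab | rfl | hab
  · have : (a + 1) * K ≤ b * K := Nat.mul_le_mul_right K hab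
    rw [add_one_mul] at this
    omega
  · omega
  · have : (b + 1) * K ≤ a * K := Nat.mul_le_mul_right K hab
    rw [add_one_mul] at this
    omega

theorem TokDom.swap {m n : ℕ} {t : Tok} (ht : TokDom m n t) : TokDom n m t.swap := by
  cases t <;> simp only [TokDom, Tok.swap] at ht ⊢ <;> omega

theorem tval_eq_tpos_swap (m : ℕ) (t : Tok) : tval m t = tpos m t.swap := by
  cases t <;> rfl

theorem tpos_lt_tpos_iff {m n : ℕ} {t t' : Tok} (ht : TokDom m n t) (ht' : TokDom m n t') :
    tpos n t < tpos n t' ↔ t.posKey n < t'.posKey n := by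
  have hkey : ∀ {s : Tok}, TokDom m n s → ∃ a x, 0 < x ∧ x ≤ 2 * n - 1 ∧
      tpos n s = a * (2 * n - 1) + x ∧ s.posKey n = toLex (a + 1, x) := by
    rintro (⟨i, j⟩ | ⟨i, j⟩) hs <;> simp only [TokDom] at hs
    · exact ⟨i - 1, j, by omega, by omega, rfl, by simp only [Tok.posKey]; congr; omega⟩
    · refine ⟨i - 2, 2 * n + 1 - j, by omega, by omega, ?_,
        by simp only [Tok.posKey]; congr 2; omega⟩
      obtain ⟨a, rfl⟩ : ∃ a, i = a + 2 := ⟨i - 2, by omega⟩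
      simp only [tpos, Nat.add_sub_cancel, show a + 2 - 1 = a + 1 by omega, add_one_mul]
      omega
  obtain ⟨a, x, hx, hxK, hpos, hk⟩ := hkey ht
  obtain ⟨b, y, hy, hyK, hpos', hk'⟩ := hkey ht'
  rw [hpos, hpos', hk, hk', Nat.mul_add_lt_mul_add_iff hx hxK hy hyK, Prod.Lex.toLex_lt_toLex]
  simp

theorem precedes_iff {m n : ℕ} {t t' : Tok} (ht : TokDom m n t) (ht' : TokDom m n t') :
    Precedes m n t t' ↔ t.posKey n < t'.posKey n ∧ t.swap.posKey m < t'.swap.posKey m := by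
  rw [Precedes, tval_eq_tpos_swap, tval_eq_tpos_swap, tpos_lt_tpos_iff ht ht',
    tpos_lt_tpos_iff ht.swap ht'.swap]

theorem exists_between_of_not_adjacent {m n : ℕ} {q q' : Tok} (hq : TokDom m n q)
    (hq' : TokDom m n q') (hqq' : Precedes m n q q') (hadj : ¬ q.Adjacent q') :
    ∃ t, TokDom m n t ∧ Precedes m n q t ∧ Precedes m n t q' := by
  rw [precedes_iff hq hq'] at hqq'
  have between : ∀ t, TokDom m n t →
      q.posKey n < t.posKey n ∧ q.swap.posKey m < t.swap.posKey m →
      t.posKey n < q'.posKey n ∧ t.swap.posKey m < q'.swap.posKey m →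
      ∃ t, TokDom m n t ∧ Precedes m n q t ∧ Precedes m n t q' :=
    fun t ht hqt htq' => ⟨t, ht, (precedes_iff hq ht).2 hqt, (precedes_iff ht hq').2 htq'⟩
  rcases q with ⟨i, j⟩ | ⟨i, j⟩
  · by_cases hj : j + q'.tilde < q'.col
    · refine between (.r i (j + 1)) ?_ ?_ ?_ <;> rcases q' with ⟨i', j'⟩ | ⟨i', j'⟩ <;>
        simp only [TokDom, Tok.Adjacent, Tok.posKey, Tok.swap, Tok.row, Tok.col, Tok.tilde,
          Prod.Lex.toLex_lt_toLex, true_and] at * <;> omega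
    · refine between (.r (i + 1) j) ?_ ?_ ?_ <;> rcases q' with ⟨i', j'⟩ | ⟨i', j'⟩ <;>
        simp only [TokDom, Tok.Adjacent, Tok.posKey, Tok.swap, Tok.row, Tok.col, Tok.tilde,
          Prod.Lex.toLex_lt_toLex, true_and] at * <;> omega
  · refine between (.r i j) ?_ ?_ ?_ <;> rcases q' with ⟨i', j'⟩ | ⟨i', j'⟩ <;>
      simp only [TokDom, Tok.Adjacent, Tok.posKey, Tok.swap, Tok.row, Tok.col, Tok.tilde,
        Prod.Lex.toLex_lt_toLex] at * <;> omega

theorem precedes_of_adjacent {m n : ℕ} {q q' : Tok} (hq : TokDom m n q) (hq' : TokDom m n q')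
    (hadj : q.Adjacent q') : Precedes m n q q' := by
  rw [precedes_iff hq hq']
  rcases q with ⟨i, j⟩ | ⟨i, j⟩ <;> rcases q' with ⟨i', j'⟩ | ⟨i', j'⟩ <;>
    simp only [TokDom, Tok.Adjacent, Tok.posKey, Tok.swap, Tok.row, Tok.col, Tok.tilde,
      Prod.Lex.toLex_lt_toLex] at * <;>
    omega

theorem not_precedes_of_adjacent_of_precedes {m n : ℕ} {q q' t : Tok} (hq : TokDom m n q)
    (hq' : TokDom m n q') (ht : TokDom m n t) (hadj : q.Adjacent q') (hqt : Precedes m n q t) :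
    ¬ Precedes m n t q' := by
  rw [precedes_iff hq ht] at hqt
  rw [precedes_iff ht hq']
  rcases q with ⟨i, j⟩ | ⟨i, j⟩ <;> rcases q' with ⟨i', j'⟩ | ⟨i', j'⟩ <;>
    rcases t with ⟨k, l⟩ | ⟨k, l⟩ <;>
    simp only [TokDom, Tok.Adjacent, Tok.posKey, Tok.swap, Tok.row, Tok.col, Tok.tilde,
      Prod.Lex.toLex_lt_toLex] at * <;>
    omega

theorem precedes_and_forall_not_between_iff_adjacent {m n : ℕ} {q q' : Tok}
    (hq : TokDom m n q) (hq' : TokDom m n q') :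
    (Precedes m n q q' ∧ ∀ t, TokDom m n t → Precedes m n q t → ¬ Precedes m n t q') ↔
      q.Adjacent q' := by
  refine ⟨fun ⟨hqq', hgap⟩ => ?_, fun hadj => ⟨precedes_of_adjacent hq hq' hadj,
    fun t ht => not_precedes_of_adjacent_of_precedes hq hq' ht hadj⟩⟩
  by_contra hadj
  obtain ⟨t, ht, hqt, htq'⟩ := exists_between_of_not_adjacent hq hq' hqq' hadj
  exact hgap t ht hqt htq'

theorem iq_eq_row_sub_tilde (t : Tok) : iq t = t.row - (t.tilde : ℚ) / 2 := by
  cases t <;> simp [iq, Tok.row, Tok.tilde]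

theorem jq_eq_col_sub_tilde (t : Tok) : jq t = t.col - (t.tilde : ℚ) / 2 := by
  cases t <;> simp [jq, Tok.col, Tok.tilde]

section HalfIntegers

variable {K : Type*} [Field K] [LinearOrder K] [IsStrictOrderedRing K]

theorem Int.ceil_natCast_sub_div_two [FloorRing K] {a e : ℕ} (he : e ≤ 1) :
    ⌈(a : K) - e / 2⌉ = a := by
  rw [Int.ceil_eq_iff]
  have : (e : K) ≤ 1 := by exact_mod_cast he
  constructor <;> push_cast <;> linarith [(Nat.cast_nonneg e : (0 : K) ≤ e)]

theorem Nat.cast_le_cast_sub_div_two_iff {a b e : ℕ} (he : e ≤ 1) :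
    (a : K) ≤ b - e / 2 ↔ a + e ≤ b := by
  interval_cases e
  · simp
  · constructor <;> intro h
    · exact_mod_cast (show (a : K) < b by push_cast at h; linarith)
    · have : (a : K) + 1 ≤ b := by exact_mod_cast h
      push_cast
      linarith

end HalfIntegers

theorem ceil_le_and_sum_eq_one_iff_adjacent (q q' : Tok) :
    ((⌈iq q⌉ : ℚ) ≤ iq q' ∧ (⌈jq q⌉ : ℚ) ≤ jq q' ∧ (iq q' - iq q) + (jq q' - jq q) = 1) ↔
      q.Adjacent q' := by
  simp only [iq_eq_row_sub_tilde, jq_eq_col_sub_tilde, Int.ceil_natCast_sub_div_two q.tilde_le_one,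
    Int.cast_natCast, Nat.cast_le_cast_sub_div_two_iff q'.tilde_le_one, Tok.Adjacent]
  have hsum : ((q'.row : ℚ) - q'.tilde / 2 - (q.row - q.tilde / 2) +
      (q'.col - q'.tilde / 2 - (q.col - q.tilde / 2)) = 1) ↔
      q'.row + q'.col + q.tilde = q.row + q.col + q'.tilde + 1 := by
    rw [← Nat.cast_inj (R := ℚ)]
    push_cast
    constructor <;> intro h <;> linarith
  rw [hsum]

theorem two_element_maximal_iff_general (m n : ℕ)
    (q q' : Tok) (hq : TokDom m n q) (hq' : TokDom m n q') :
    MaxIncSeg m n (tpos n q) (tpos n q') [q, q'] ↔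
      ((⌈iq q⌉ : ℚ) ≤ iq q' ∧ (⌈jq q⌉ : ℚ) ≤ jq q' ∧
        (iq q' - iq q) + (jq q' - jq q) = 1) := by
  rw [maxIncSeg_pair_iff hq hq', precedes_and_forall_not_between_iff_adjacent hq hq',
    ceil_le_and_sum_eq_one_iff_adjacent]

theorem two_element_maximal_iff (m n : ℕ) (hm : 1 ≤ m) (hn : 1 ≤ n)
    (q q' : Tok) (hq : TokDom m n q) (hq' : TokDom m n q') :
    MaxIncSeg m n (tpos n q) (tpos n q') [q, q'] ↔
      ((⌈iq q⌉ : ℚ) ≤ iq q' ∧ (⌈jq q⌉ : ℚ) ≤ jq q' ∧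
        (iq q' - iq q) + (jq q' - jq q) = 1) :=
  two_element_maximal_iff_general m n q q' hq hq'
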